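/- Let c > 0 and consider on open subsets of {(x,y) ∈ ℝ² : x ≠ 0} the Milne–Pinney vector fields X₁ = (0,−x), X₂ = (−x/2, y/2), X₃ = (y, c/x³). There is no nonempty open set U ⊆ {(x,y) : x ≠ 0} and smooth nowhere-vanishing vector field Y : U → ℝ² such that for each i ∈ {1,2,3} and every q ∈ U the bracket [X_i,Y](q) is a real scalar multiple of Y(q). Hence the Vessiot–Guldberg Lie algebra of the Milne–Pinney equations is primitive when c > 0 (and is therefore locally diffeomorphic to the primitive class P₂ ≅ sl(2)). -/

import Mathlib

namespace Stmt17

/-- Lie bracket of planar vector fields: [X,Y](p) = DY(p)·X(p) − DX(p)·Y(p). -/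
noncomputable def lb (X Y : ℝ × ℝ → ℝ × ℝ) : ℝ × ℝ → ℝ × ℝ :=
  fun p => fderiv ℝ Y p (X p) - fderiv ℝ X p (Y p)

/-- Milne–Pinney vector fields X₁ = −x∂_y, X₂ = ½(y∂_y − x∂ₓ), X₃ = y∂ₓ + (c/x³)∂_y. -/
def X1 : ℝ × ℝ → ℝ × ℝ := fun p => (0, -p.1)
noncomputable def X2 : ℝ × ℝ → ℝ × ℝ := fun p => (-p.1 / 2, p.2 / 2)
noncomputable def X3 (c : ℝ) : ℝ × ℝ → ℝ × ℝ := fun p => (p.2, c / p.1 ^ 3)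

section Aux
open ContinuousLinearMap

lemma fderivX1 (q v : ℝ × ℝ) : fderiv ℝ X1 q v = (0, -v.1) := by
  have h : HasFDerivAt X1 (((0 : (ℝ×ℝ) →L[ℝ] ℝ)).prod (-(fst ℝ ℝ ℝ))) q :=
    (hasFDerivAt_const _ _).prodMk (hasFDerivAt_fst.neg)
  rw [h.fderiv]; simp

lemma fderivX2 (q v : ℝ × ℝ) : fderiv ℝ X2 q v = (-v.1 / 2, v.2 / 2) := by
  have h : HasFDerivAt X2 ((((2:ℝ)⁻¹) • (-(fst ℝ ℝ ℝ))).prod (((2:ℝ)⁻¹) • (snd ℝ ℝ ℝ))) q := by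
    apply HasFDerivAt.prodMk
    · convert (((hasFDerivAt_fst : HasFDerivAt _ (fst ℝ ℝ ℝ) q)).neg.const_smul ((2:ℝ)⁻¹)) using 1
      funext p; simp [X2, div_eq_inv_mul]
    · convert (((hasFDerivAt_snd : HasFDerivAt _ (snd ℝ ℝ ℝ) q)).const_smul ((2:ℝ)⁻¹)) using 1
      funext p; simp [X2, div_eq_inv_mul]
  rw [h.fderiv]; simp [div_eq_inv_mul]

lemma fderivX3 (c : ℝ) (q v : ℝ × ℝ) (hx : q.1 ≠ 0) :
    fderiv ℝ (X3 c) q v = (v.2, (-(3*c) / q.1 ^ 4) * v.1) := by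
  have hd : HasDerivAt (fun x : ℝ => c / x ^ 3) (-(3*c) / q.1 ^ 4) q.1 := by
    have := (hasDerivAt_const q.1 c).fun_div (hasDerivAt_pow 3 q.1) (pow_ne_zero 3 hx)
    refine this.congr_deriv ?_
    push_cast; field_simp; ring
  have h : HasFDerivAt (X3 c) ((snd ℝ ℝ ℝ).prod ((-(3*c) / q.1 ^ 4) • (fst ℝ ℝ ℝ))) q := by
    apply HasFDerivAt.prodMk
    · exact hasFDerivAt_snd
    · exact hd.comp_hasFDerivAt q (hasFDerivAt_fst)
  rw [h.fderiv]; simp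

end Aux

/-- For c > 0 there is no nonempty open `U ⊆ {x ≠ 0}` and smooth nowhere-vanishing
vector field `Y` on `U` such that each bracket [Xᵢ,Y] is pointwise a scalar multiple
of Y: the Vessiot–Guldberg Lie algebra of the Milne–Pinney equations is primitive when
c > 0 (hence locally diffeomorphic to the primitive class P₂ ≅ sl(2)). -/
theorem stmt_17 (c : ℝ) (hc : c > 0) :
    ¬ ∃ (U : Set (ℝ × ℝ)) (Y : ℝ × ℝ → ℝ × ℝ),
      IsOpen U ∧ U.Nonempty ∧ U ⊆ {p : ℝ × ℝ | p.1 ≠ 0} ∧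
      ContDiffOn ℝ (⊤ : ℕ∞) Y U ∧ (∀ q ∈ U, Y q ≠ 0) ∧
      (∀ q ∈ U, ∃ s : ℝ, lb X1 Y q = s • Y q) ∧
      (∀ q ∈ U, ∃ s : ℝ, lb X2 Y q = s • Y q) ∧
      (∀ q ∈ U, ∃ s : ℝ, lb (X3 c) Y q = s • Y q) := by
  rintro ⟨U, Y, hU, ⟨q, hq⟩, hsub, hsm, hY0, H1, H2, H3⟩
  have hx : q.1 ≠ 0 := hsub hq
  obtain ⟨s1, h1⟩ := H1 q hq
  obtain ⟨s2, h2⟩ := H2 q hq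
  obtain ⟨s3, h3⟩ := H3 q hq
  set x := q.1 with hxdef
  set y := q.2 with hydef
  set f := (Y q).1 with hf
  set g := (Y q).2 with hg
  set a1 : ℝ := y ^ 2 / x ^ 2 + c / x ^ 4 with ha1
  set a2 : ℝ := 2 * y / x with ha2
  -- the pointwise linear relation among the Xᵢ
  have key : a1 • X1 q + a2 • X2 q + X3 c q = 0 := by
    simp only [X1, X2, X3, Prod.smul_mk, smul_eq_mul, Prod.mk_add_mk, Prod.mk_eq_zero, ha1, ha2, ← hxdef, ← hydef]
    constructor <;> · field_simp; ring
  simp only [lb] at h1 h2 h3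
  -- combine
  have comb : a1 • (fderiv ℝ Y q (X1 q) - fderiv ℝ X1 q (Y q))
      + a2 • (fderiv ℝ Y q (X2 q) - fderiv ℝ X2 q (Y q))
      + (fderiv ℝ Y q (X3 c q) - fderiv ℝ (X3 c) q (Y q))
      = (a1 * s1 + a2 * s2 + s3) • Y q := by
    rw [h1, h2, h3]
    module
  have hlin : fderiv ℝ Y q (a1 • X1 q + a2 • X2 q + X3 c q) = 0 := by
    rw [key]; simp
  rw [map_add, map_add, map_smul, map_smul] at hlin
  set t : ℝ := a1 * s1 + a2 * s2 + s3 with ht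
  have split : a1 • (fderiv ℝ Y q (X1 q) - fderiv ℝ X1 q (Y q))
      + a2 • (fderiv ℝ Y q (X2 q) - fderiv ℝ X2 q (Y q))
      + (fderiv ℝ Y q (X3 c q) - fderiv ℝ (X3 c) q (Y q))
      = (a1 • fderiv ℝ Y q (X1 q) + a2 • fderiv ℝ Y q (X2 q) + fderiv ℝ Y q (X3 c q))
        - (a1 • fderiv ℝ X1 q (Y q) + a2 • fderiv ℝ X2 q (Y q) + fderiv ℝ (X3 c) q (Y q)) := by
    module
  rw [split, hlin, zero_sub] at comb
  have e1 := congrArg Prod.fst comb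
  have e2 := congrArg Prod.snd comb
  rw [fderivX1, fderivX2, fderivX3 c q _ hx] at e1 e2
  simp only [Prod.fst_add, Prod.snd_add, Prod.smul_fst, Prod.smul_snd, Prod.fst_neg,
    Prod.snd_neg, smul_eq_mul, ← hf, ← hg] at e1 e2
  have hYq : ¬ (f = 0 ∧ g = 0) := fun ⟨u, v⟩ => hY0 q hq (Prod.ext_iff.mpr ⟨u, v⟩)
  have hx4 : x ^ 4 > 0 := by positivity
  rw [ha1, ha2] at e1 e2
  field_simp at e1 e2
  simp only [← hxdef] at e2
  have key2 : 2 * x ^ 7 * (f * (4 * c + t ^ 2 * x ^ 4)) = 0 := by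
    have h4 : x ^ 4 * c * f * 3 / x ^ 4 = 3 * c * f := by field_simp
    linear_combination 2 * x ^ 6 * (x * e2 - (y + x * t) * e1) - 2 * x ^ 7 * h4
  have hpos : 4 * c + t ^ 2 * x ^ 4 > 0 := by positivity
  have h7 : (2:ℝ) * x ^ 7 ≠ 0 := mul_ne_zero two_ne_zero (pow_ne_zero 7 hx)
  have hf0 : f = 0 := by
    rcases mul_eq_zero.mp key2 with h | h
    · exact absurd h h7
    · rcases mul_eq_zero.mp h with h | h
      · exact h
      · exact absurd h hpos.ne'
  have hg0 : g = 0 := by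
    rw [hf0] at e1
    have h2x : (x : ℝ) * 2 ≠ 0 := mul_ne_zero hx two_ne_zero
    field_simp at e1
    rcases mul_eq_zero.mp (show x ^ 4 * g = 0 by linarith) with h | h
    · exact absurd h (pow_ne_zero 4 hx)
    · exact h
  exact hYq ⟨hf0, hg0⟩


end Stmt17
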